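/- arXiv:2209.10338 — 6 statements merged into one kernel-verified Lean document; each statement's English description precedes it below -/
import Mathlib

section
/- Let U = {m_1,...,m_q} be a multiset of monomials (none equal to 1), and for T ⊆ [q] let m_T = lcm{m_j : j ∈ T} with m_∅ = 1. Let M be a homogeneous matching on the directed Hasse diagram G_U of 2^[q] (i.e., for every matched edge (T, T') one has m_T = m_{T'}). Then any directed cycle C in G_U^M satisfies: q ≥ 3, C has at least 6 edges, and all vertices T of C have the same monomial label m_T. -/
open Finset

/-- for a homogeneous matching `M` on the labeled Hasse diagram `G_U` of a
multiset of nontrivial monomials `U = {m_1, …, m_q}` (exponent vectors in `ℕ^N`), any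
directed cycle in `G_U^M` forces `q ≥ 3`, has at least 6 edges, and all its vertices carry
the same monomial label. -/
theorem stmt1 (q N : ℕ) (m : Fin q → Fin N → ℕ) (hm : ∀ j, m j ≠ 0)
    (M : Set (Finset (Fin q) × Finset (Fin q)))
    (hedge : ∀ p ∈ M, p.2 ⊆ p.1 ∧ p.1.card = p.2.card + 1)
    (hmatch : ∀ p ∈ M, ∀ p' ∈ M, p ≠ p' →
      p.1 ≠ p'.1 ∧ p.1 ≠ p'.2 ∧ p.2 ≠ p'.1 ∧ p.2 ≠ p'.2)
    (hhom : ∀ p ∈ M, ∀ i, p.1.sup (fun j => m j i) = p.2.sup (fun j => m j i))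
    (L : ℕ) (hL : 0 < L) (c : ℕ → Finset (Fin q))
    (hstep : ∀ k < L,
      (c (k+1) ⊆ c k ∧ (c k).card = (c (k+1)).card + 1 ∧ (c k, c (k+1)) ∉ M) ∨
      (c (k+1), c k) ∈ M)
    (hclose : c L = c 0) :
    3 ≤ q ∧ 6 ≤ L ∧
      ∀ k ≤ L, ∀ l ≤ L, ∀ i, (c k).sup (fun j => m j i) = (c l).sup (fun j => m j i) := by
  -- matched pairs sharing a component are equal
  have hM_eq : ∀ p ∈ M, ∀ p' ∈ M,
      (p.1 = p'.1 ∨ p.1 = p'.2 ∨ p.2 = p'.1 ∨ p.2 = p'.2) → p = p' := by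
    intro p hp p' hp' h
    by_contra hne
    have := hmatch p hp p' hp' hne
    tauto
  -- labels weakly decrease along the cycle
  have hmono : ∀ k < L, ∀ i,
      (c (k+1)).sup (fun j => m j i) ≤ (c k).sup (fun j => m j i) := by
    intro k hk i
    rcases hstep k hk with ⟨hsub, _, _⟩ | hup
    · exact Finset.sup_mono hsub
    · exact (hhom _ hup i).le
  have hle : ∀ k d, k + d ≤ L → ∀ i,
      (c (k+d)).sup (fun j => m j i) ≤ (c k).sup (fun j => m j i) := by
    intro k d
    induction d with
    | zero => intro _ i; exact le_rfl
    | succ n ih =>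
      intro h i
      exact le_trans (hmono (k+n) (by omega) i) (ih (by omega) i)
  have heq : ∀ k ≤ L, ∀ i, (c k).sup (fun j => m j i) = (c 0).sup (fun j => m j i) := by
    intro k hk i
    have h1 := hle 0 k (by omega) i
    have h2 := hle k (L - k) (by omega) i
    rw [show k + (L - k) = L by omega, hclose] at h2
    simp only [Nat.zero_add] at h1
    omega
  -- enriched step information
  have hcards : ∀ k < L,
      (c (k+1) ⊆ c k ∧ (c k).card = (c (k+1)).card + 1 ∧ (c k, c (k+1)) ∉ M) ∨
      (c k ⊆ c (k+1) ∧ (c (k+1)).card = (c k).card + 1 ∧ (c (k+1), c k) ∈ M) := by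
    intro k hk
    rcases hstep k hk with h | hup
    · exact Or.inl h
    · exact Or.inr ⟨(hedge _ hup).1, (hedge _ hup).2, hup⟩
  -- parity: L is even
  have hpar : ∀ k ≤ L, ((c k).card + k) % 2 = (c 0).card % 2 := by
    intro k
    induction k with
    | zero => intro _; rfl
    | succ n ih =>
      intro h
      have h1 := ih (by omega)
      rcases hcards n (by omega) with ⟨_, h2, _⟩ | ⟨_, h2, _⟩ <;> omega
  have hLeven : L % 2 = 0 := by
    have := hpar L le_rfl
    rw [hclose] at this
    omega
  -- intersection trick
  have hmeet : ∀ A B s t : Finset (Fin q), A ≠ B → A.card = B.card → s ⊆ A → s ⊆ B →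
      t ⊆ A → t ⊆ B → s.card + 1 = A.card → t.card + 1 = A.card → s = t := by
    intro A B s t hne hcard hsA hsB htA htB hs ht
    have hAB : ¬ A ⊆ B := fun h => hne (Finset.eq_of_subset_of_card_le h (le_of_eq hcard.symm))
    have hint : (A ∩ B).card < A.card := by
      have h1 : A ∩ B ⊆ A := Finset.inter_subset_left
      have h2 : A ∩ B ≠ A := fun h => hAB (Finset.inter_eq_left.mp h)
      exact Finset.card_lt_card (h1.ssubset_of_ne h2)
    have hsc := Finset.card_le_card (Finset.subset_inter hsA hsB)
    have htc := Finset.card_le_card (Finset.subset_inter htA htB)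
    have h1 : s = A ∩ B :=
      Finset.eq_of_subset_of_card_le (Finset.subset_inter hsA hsB) (by omega)
    have h2 : t = A ∩ B :=
      Finset.eq_of_subset_of_card_le (Finset.subset_inter htA htB) (by omega)
    rw [h1, h2]
  -- L ≠ 2
  have hL2 : L ≠ 2 := by
    intro h; subst h
    have e0 := hcards 0 (by omega)
    have e1 := hcards 1 (by omega)
    norm_num at e0 e1
    rw [hclose] at e1
    rcases e0 with ⟨s0, a0, b0⟩ | ⟨s0, a0, b0⟩ <;>
      rcases e1 with ⟨s1, a1, b1⟩ | ⟨s1, a1, b1⟩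
    · omega
    · exact b0 b1
    · exact b1 b0
    · omega
  -- L ≠ 4
  have hL4 : L ≠ 4 := by
    intro h; subst h
    have e0 := hcards 0 (by omega)
    have e1 := hcards 1 (by omega)
    have e2 := hcards 2 (by omega)
    have e3 := hcards 3 (by omega)
    norm_num at e0 e1 e2 e3
    rw [hclose] at e3
    rcases e0 with ⟨s0, a0, b0⟩ | ⟨s0, a0, b0⟩ <;>
      rcases e1 with ⟨s1, a1, b1⟩ | ⟨s1, a1, b1⟩ <;>
      rcases e2 with ⟨s2, a2, b2⟩ | ⟨s2, a2, b2⟩ <;>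
      rcases e3 with ⟨s3, a3, b3⟩ | ⟨s3, a3, b3⟩ <;>
      try omega
    -- D D U U
    · have h := hM_eq _ b2 _ b3 (Or.inr (Or.inl rfl))
      rw [Prod.mk.injEq] at h
      obtain ⟨h1, h2⟩ := h
      rw [h2] at a2
      omega
    -- D U D U
    · have hne : c 0 ≠ c 2 := by
        intro h
        apply b0
        rw [h]
        exact b1
      have h13 : c 1 = c 3 :=
        hmeet (c 0) (c 2) (c 1) (c 3) hne (by omega) s0 s1 s3 s2 (by omega) (by omega)
      have h := hM_eq _ b1 _ b3 (Or.inr (Or.inr (Or.inr h13)))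
      rw [Prod.mk.injEq] at h
      exact hne h.1.symm
    -- D U U D
    · have h := hM_eq _ b1 _ b2 (Or.inr (Or.inl rfl))
      rw [Prod.mk.injEq] at h
      obtain ⟨h1, h2⟩ := h
      rw [h2] at a1
      omega
    -- U D D U
    · have h := hM_eq _ b0 _ b3 (Or.inr (Or.inr (Or.inl rfl)))
      rw [Prod.mk.injEq] at h
      obtain ⟨h1, h2⟩ := h
      rw [h1] at a0
      omega
    -- U D U D
    · have hne : c 1 ≠ c 3 := by
        intro h
        have h' := hM_eq _ b0 _ b2 (Or.inl h)
        rw [Prod.mk.injEq] at h'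
        apply b1
        rw [← h'.2]
        exact b0
      have h02 : c 0 = c 2 :=
        hmeet (c 1) (c 3) (c 0) (c 2) hne (by omega) s0 s3 s1 s2 (by omega) (by omega)
      apply b1
      rw [← h02]
      exact b0
    -- U U D D
    · have h := hM_eq _ b0 _ b1 (Or.inr (Or.inl rfl))
      rw [Prod.mk.injEq] at h
      obtain ⟨h1, h2⟩ := h
      rw [h1] at a1
      omega
  have hL6 : 6 ≤ L := by omega
  -- no empty vertex before L
  have hnonempty : ∀ k < L, c k ≠ ∅ := by
    intro k hk hempty
    rcases hstep k hk with ⟨_, h2, _⟩ | hup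
    · rw [hempty] at h2; simp at h2
    · have h2 := (hedge _ hup).2
      rw [hempty] at h2
      simp at h2
      obtain ⟨j, hj⟩ := Finset.card_eq_one.mp h2
      apply hm j
      funext i
      have h3 := hhom _ hup i
      rw [hj, hempty] at h3
      simpa using h3
  -- q ≥ 3
  have hq : 3 ≤ q := by
    by_contra hq
    push_neg at hq
    have hcle : ∀ k, (c k).card ≤ 2 := by
      intro k
      have h := Finset.card_le_univ (c k)
      simp [Finset.card_univ] at h
      omega
    have hpos : ∀ k ≤ L, 1 ≤ (c k).card := by
      intro k hk
      rcases eq_or_lt_of_le hk with rfl | hlt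
      · rw [hclose]
        exact Finset.card_pos.mpr (Finset.nonempty_iff_ne_empty.mpr (hnonempty 0 hL))
      · exact Finset.card_pos.mpr (Finset.nonempty_iff_ne_empty.mpr (hnonempty k hlt))
    have hup' : ∀ k < L, (c k).card = 1 → (c (k+1), c k) ∈ M ∧ (c (k+1)).card = 2 := by
      intro k hk h1
      rcases hstep k hk with ⟨_, h2, _⟩ | hup
      · have := hpos (k+1) (by omega); omega
      · refine ⟨hup, ?_⟩
        have h3 : (c (k+1)).card = (c k).card + 1 := (hedge _ hup).2
        omega
    have hdown' : ∀ k < L, (c k).card = 2 →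
        (c (k+1)).card = 1 ∧ (c k, c (k+1)) ∉ M := by
      intro k hk h2
      rcases hstep k hk with ⟨_, h2', h3⟩ | hup
      · exact ⟨by omega, h3⟩
      · have h4 : (c (k+1)).card = (c k).card + 1 := (hedge _ hup).2
        have h5 := hcle (k+1)
        omega
    obtain ⟨k, hk1, hkcard⟩ : ∃ k, k ≤ 1 ∧ (c k).card = 1 := by
      have h0 := hpos 0 (by omega)
      have h0' := hcle 0
      rcases (show (c 0).card = 1 ∨ (c 0).card = 2 by omega) with h | h
      · exact ⟨0, by omega, h⟩
      · exact ⟨1, le_rfl, (hdown' 0 hL h).1⟩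
    obtain ⟨u1, u1c⟩ := hup' k (by omega) hkcard
    obtain ⟨d1c, d1⟩ := hdown' (k+1) (by omega) u1c
    have e12 : k + 1 + 1 = k + 2 := by omega
    rw [e12] at d1c d1
    obtain ⟨u2, u2c⟩ := hup' (k+2) (by omega) d1c
    have hq2 : q = 2 := by
      have h := Finset.card_le_univ (c (k+1))
      simp [Finset.card_univ] at h
      omega
    have huniv1 : c (k+1) = Finset.univ :=
      Finset.eq_of_subset_of_card_le (Finset.subset_univ _)
        (by simp [Finset.card_univ, hq2, u1c])
    have huniv2 : c (k+2+1) = Finset.univ :=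
      Finset.eq_of_subset_of_card_le (Finset.subset_univ _)
        (by simp [Finset.card_univ, hq2, u2c])
    have hpp := hM_eq _ u1 _ u2 (Or.inl (huniv1.trans huniv2.symm))
    rw [Prod.mk.injEq] at hpp
    apply d1
    rw [← hpp.2]
    exact u1
  refine ⟨hq, hL6, ?_⟩
  intro k hk l hl i
  rw [heq k hk i, heq l hl i]
end

section
/- Let U = {m_1,...,m_q} be a multiset of nontrivial monomials, u ∈ LCM(U) (the set of lcms of nonempty subsets of U), and V = {i ∈ [q] : m_i does not divide u}. Define the complementary set family Ū_u = { T ⊆ [q] : m_{[q]∖T} = u }. Then every T ∈ Ū_u contains V, and the family Δ = { T ∖ V : T ∈ Ū_u } is a simplicial complex (i.e., closed under taking subsets) on vertex set [q] ∖ V; consequently Ū_u = { F ∪ V : F ∈ Δ }. -/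
open Finset

/-- with `V = {i : m_i ∤ u}` and `Ū_u = {T : m_{[q]∖T} = u}`, every member of
`Ū_u` contains `V`, the family `Δ = {T ∖ V : T ∈ Ū_u}` is downward closed, and
`Ū_u = {F ∪ V : F ∈ Δ}`. -/
theorem stmt2 (q N : ℕ) (m : Fin q → Fin N → ℕ) (hm : ∀ j, m j ≠ 0)
    (u : Fin N → ℕ)
    (hu : ∃ S : Finset (Fin q), S.Nonempty ∧ ∀ i, S.sup (fun j => m j i) = u i)
    (V : Finset (Fin q)) (hV : V = Finset.univ.filter fun j => ¬ ∀ i, m j i ≤ u i) :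
    (∀ T : Finset (Fin q), (∀ i, Tᶜ.sup (fun j => m j i) = u i) → V ⊆ T) ∧
    (∀ T : Finset (Fin q), (∀ i, Tᶜ.sup (fun j => m j i) = u i) →
      ∀ F ⊆ T \ V, ∃ T' : Finset (Fin q),
        (∀ i, T'ᶜ.sup (fun j => m j i) = u i) ∧ F = T' \ V) ∧
    (∀ T : Finset (Fin q), (∀ i, Tᶜ.sup (fun j => m j i) = u i) ↔
      ∃ T' : Finset (Fin q),
        (∀ i, T'ᶜ.sup (fun j => m j i) = u i) ∧ T = (T' \ V) ∪ V) := by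
  have hVsub : ∀ T : Finset (Fin q), (∀ i, Tᶜ.sup (fun j => m j i) = u i) → V ⊆ T := by
    intro T hT j hjV
    rw [hV, mem_filter] at hjV
    by_contra hjT
    exact hjV.2 fun i => (hT i) ▸ le_sup (f := fun j => m j i) (mem_compl.2 hjT)
  refine ⟨hVsub, ?_, ?_⟩
  · intro T hT F hF
    refine ⟨F ∪ V, fun i => ?_, ?_⟩
    · refine le_antisymm (Finset.sup_le fun j hj => ?_) ?_
      · rw [mem_compl, mem_union] at hj
        push_neg at hj
        have : j ∉ V := hj.2
        rw [hV, mem_filter] at this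
        push_neg at this
        exact this (mem_univ j) i
      · rw [← hT i]
        exact Finset.sup_mono (compl_subset_compl.2 (union_subset
          (hF.trans (sdiff_subset)) (hVsub T hT)))
    · have hFV : Disjoint F V := (sdiff_disjoint).mono_left hF
      rw [union_sdiff_right, sdiff_eq_self_of_disjoint hFV]
  · intro T
    constructor
    · intro hT
      exact ⟨T, hT, by rw [sdiff_union_self_eq_union, union_eq_left.2 (hVsub T hT)]⟩
    · rintro ⟨T', hT', rfl⟩
      have : (T' \ V) ∪ V = T' := by
        rw [sdiff_union_self_eq_union, union_eq_left.2 (hVsub T' hT')]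
      rw [this]
      exact hT'
end

section
/- Let I = (u_1, u_2, x_1^{e_1},...,x_n^{e_n}) where u_1 = x_1^{a_1}···x_n^{a_n}, u_2 = x_1^{b_1}···x_n^{b_n}, a_i + b_i > 0 for all i, and e_i > max(a_i, b_i). Index the generators by [n+2] with 1 ↦ u_1, 2 ↦ u_2, i+2 ↦ x_i^{e_i}. Set P_1 = {i+2 : a_i > b_i}, A = {i+2 : a_i > 0}, and X = {3,...,n+2}. For T ⊆ [n+2] with 1 ∈ T, we have m_T = m_{T∖{1}} if and only if either (i) {1,2} ∪ P_1 ⊆ T, or (ii) 2 ∉ T and A ∪ {1} ⊆ T. -/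
open Finset

def v1 {n : ℕ} : Fin 2 ⊕ Fin n := Sum.inl 0
def v2 {n : ℕ} : Fin 2 ⊕ Fin n := Sum.inl 1

/-- Generators of `I`: index `inl 0 ↦ u₁` (exponents `a`), `inl 1 ↦ u₂` (exponents `b`),
`inr i ↦ x_i^{e_i}`; monomials modeled as exponent vectors. -/
def gen {n : ℕ} (a b e : Fin n → ℕ) : Fin 2 ⊕ Fin n → Fin n → ℕ :=
  Sum.elim (fun t => if t = 0 then a else b) (fun i j => if j = i then e i else 0)

/-- The lcm label `m_T` of a subset of generators (pointwise max of exponent vectors). -/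
def mT {n : ℕ} (a b e : Fin n → ℕ) (T : Finset (Fin 2 ⊕ Fin n)) : Fin n → ℕ :=
  fun i => T.sup fun k => gen a b e k i

def P0 {n : ℕ} (a b : Fin n → ℕ) : Finset (Fin 2 ⊕ Fin n) :=
  (Finset.univ.filter fun i => a i = b i).image Sum.inr

def P1 {n : ℕ} (a b : Fin n → ℕ) : Finset (Fin 2 ⊕ Fin n) :=
  (Finset.univ.filter fun i => b i < a i).image Sum.inr

def P2 {n : ℕ} (a b : Fin n → ℕ) : Finset (Fin 2 ⊕ Fin n) :=
  (Finset.univ.filter fun i => a i < b i).image Sum.inr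

def setA {n : ℕ} (a : Fin n → ℕ) : Finset (Fin 2 ⊕ Fin n) :=
  (Finset.univ.filter fun i => 0 < a i).image Sum.inr

def setB {n : ℕ} (b : Fin n → ℕ) : Finset (Fin 2 ⊕ Fin n) :=
  (Finset.univ.filter fun i => 0 < b i).image Sum.inr

/-- The matching `M` on the Hasse diagram of `2^[n+2]`: `MM a b T T'` means `(T,T')` is an
edge of the matching, given by the four families of the paper. -/
def MM {n : ℕ} (a b : Fin n → ℕ) (T T' : Finset (Fin 2 ⊕ Fin n)) : Prop :=
  (v1 ∈ T ∧ v2 ∈ T ∧ P1 a b ⊆ T ∧ T' = T.erase v1) ∨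
  (v1 ∈ T ∧ v2 ∈ T ∧ ¬ P1 a b ⊆ T ∧ P2 a b ⊆ T ∧ T' = T.erase v2) ∨
  (v1 ∈ T ∧ v2 ∉ T ∧ setA a ⊆ T ∧ T' = T.erase v1) ∨
  (v1 ∉ T ∧ v2 ∈ T ∧ setB b ⊆ T ∧ T ≠ Finset.univ.erase v1 ∧ T' = T.erase v2)

/-- `T` is an `M`-critical vertex: it is incident to no edge of the matching. -/
def critical {n : ℕ} (a b : Fin n → ℕ) (T : Finset (Fin 2 ⊕ Fin n)) : Prop :=
  ∀ T', ¬ MM a b T T' ∧ ¬ MM a b T' T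

/-- for `T` containing `u₁`, `m_T = m_{T∖{1}}` iff `{1,2} ∪ P₁ ⊆ T`, or
`2 ∉ T` and `A ∪ {1} ⊆ T`. -/
theorem stmt5 (n : ℕ) (a b e : Fin n → ℕ) (hab : ∀ i, 0 < a i + b i)
    (he : ∀ i, max (a i) (b i) < e i)
    (T : Finset (Fin 2 ⊕ Fin n)) (h1 : v1 ∈ T) :
    mT a b e T = mT a b e (T.erase v1) ↔
      (insert (v1 : Fin 2 ⊕ Fin n) (insert v2 (P1 a b)) ⊆ T) ∨
      (v2 ∉ T ∧ insert (v1 : Fin 2 ⊕ Fin n) (setA a) ⊆ T) := by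

  have hv12 : (v2 : Fin 2 ⊕ Fin n) ≠ v1 := by simp [v1, v2]
  have hgr : ∀ (j i : Fin n), gen a b e (Sum.inr j) i = if i = j then e j else 0 := fun _ _ => rfl
  have hg2 : ∀ i : Fin n, gen a b e v2 i = b i := by
    intro i; simp [gen, v2]
  have hT : ∀ i, mT a b e T i = max (a i) (mT a b e (T.erase v1) i) := by
    intro i
    show _ = gen a b e v1 i ⊔ _
    rw [mT, mT]
    conv_lhs => rw [← Finset.insert_erase h1]
    rw [Finset.sup_insert]
  have hiff : mT a b e T = mT a b e (T.erase v1) ↔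
      ∀ i, a i ≤ mT a b e (T.erase v1) i := by
    rw [funext_iff]
    refine forall_congr' fun i => ?_
    rw [hT i, max_eq_right_iff]
  rw [hiff]
  constructor
  · intro key
    by_cases hv2 : v2 ∈ T
    · left
      rw [Finset.insert_subset_iff, Finset.insert_subset_iff]
      refine ⟨h1, hv2, fun k hk => ?_⟩
      simp only [P1, Finset.mem_image, Finset.mem_filter, Finset.mem_univ, true_and] at hk
      obtain ⟨i, hi, rfl⟩ := hk
      have hai : (0:ℕ) < a i := lt_of_le_of_lt (Nat.zero_le _) hi
      have h := key i
      rw [mT, Finset.le_sup_iff hai] at h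
      obtain ⟨k, hk, hle⟩ := h
      rw [Finset.mem_erase] at hk
      rcases k with t | j
      · have ht : t = 0 ∨ t = 1 := by omega
        rcases ht with rfl | rfl
        · exact absurd rfl hk.1
        · simp [gen] at hle; omega
      · rw [hgr] at hle
        by_cases hij : i = j
        · subst hij; exact hk.2
        · simp [hij] at hle; omega
    · right
      rw [Finset.insert_subset_iff]
      refine ⟨hv2, h1, fun k hk => ?_⟩
      simp only [setA, Finset.mem_image, Finset.mem_filter, Finset.mem_univ, true_and] at hk
      obtain ⟨i, hi, rfl⟩ := hk
      have h := key i
      rw [mT, Finset.le_sup_iff hi] at h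
      obtain ⟨k, hk, hle⟩ := h
      rw [Finset.mem_erase] at hk
      rcases k with t | j
      · have ht : t = 0 ∨ t = 1 := by omega
        rcases ht with rfl | rfl
        · exact absurd rfl hk.1
        · exact absurd hk.2 hv2
      · rw [hgr] at hle
        by_cases hij : i = j
        · subst hij; exact hk.2
        · simp [hij] at hle; omega
  · intro h i
    rcases h with hsub | ⟨hv2, hsub⟩
    · rw [Finset.insert_subset_iff, Finset.insert_subset_iff] at hsub
      obtain ⟨-, hv2, hP1⟩ := hsub
      by_cases hiT : Sum.inr i ∈ T
      · calc a i ≤ e i := le_of_lt (lt_of_le_of_lt (le_max_left _ _) (he i))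
          _ = gen a b e (Sum.inr i) i := by rw [hgr]; simp
          _ ≤ _ := Finset.le_sup (f := fun k => gen a b e k i)
            (Finset.mem_erase.mpr ⟨Sum.inr_ne_inl, hiT⟩)
      · have hba : a i ≤ b i := by
          by_contra hc
          exact hiT (hP1 (by simp only [P1, Finset.mem_image, Finset.mem_filter,
            Finset.mem_univ, true_and]; exact ⟨i, by omega, rfl⟩))
        calc a i ≤ b i := hba
          _ = gen a b e v2 i := (hg2 i).symm
          _ ≤ _ := Finset.le_sup (f := fun k => gen a b e k i) (Finset.mem_erase.mpr ⟨hv12, hv2⟩)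
    · rw [Finset.insert_subset_iff] at hsub
      rcases Nat.eq_zero_or_pos (a i) with hz | hp
      · simp [hz]
      · have hiT : Sum.inr i ∈ T := hsub.2 (by simp only [setA, Finset.mem_image,
          Finset.mem_filter, Finset.mem_univ, true_and]; exact ⟨i, hp, rfl⟩)
        calc a i ≤ e i := le_of_lt (lt_of_le_of_lt (le_max_left _ _) (he i))
          _ = gen a b e (Sum.inr i) i := by rw [hgr]; simp
          _ ≤ _ := Finset.le_sup (f := fun k => gen a b e k i)
            (Finset.mem_erase.mpr ⟨Sum.inr_ne_inl, hiT⟩)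
end

section
/- Let I = (u_1, u_2, x_1^{e_1},...,x_n^{e_n}) with u_1 = ∏ x_i^{a_i}, u_2 = ∏ x_i^{b_i}, a_i + b_i > 0, e_i > max(a_i,b_i), generators indexed by [n+2] as usual. Set P_2 = {i+2 : a_i < b_i}, B = {i+2 : b_i > 0}. For T ⊆ [n+2] with 2 ∈ T, we have m_T = m_{T∖{2}} if and only if either (i) {1,2} ∪ P_2 ⊆ T, or (ii) 1 ∉ T and B ∪ {2} ⊆ T. -/
open Finset

lemma gen_v1 {n : ℕ} (a b e : Fin n → ℕ) : gen a b e v1 = a := by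
  simp [gen, v1]

lemma gen_v2 {n : ℕ} (a b e : Fin n → ℕ) : gen a b e v2 = b := by
  simp [gen, v2]

lemma gen_inr {n : ℕ} (a b e : Fin n → ℕ) (j i : Fin n) :
    gen a b e (Sum.inr j) i = if i = j then e j else 0 := rfl

lemma v1_ne_v2 {n : ℕ} : (v1 : Fin 2 ⊕ Fin n) ≠ v2 := by
  simp [v1, v2]

/-- for `T` containing `u₂`, `m_T = m_{T∖{2}}` iff `{1,2} ∪ P₂ ⊆ T`, or
`1 ∉ T` and `B ∪ {2} ⊆ T`. -/
theorem stmt6 (n : ℕ) (a b e : Fin n → ℕ) (hab : ∀ i, 0 < a i + b i)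
    (he : ∀ i, max (a i) (b i) < e i)
    (T : Finset (Fin 2 ⊕ Fin n)) (h2 : v2 ∈ T) :
    mT a b e T = mT a b e (T.erase v2) ↔
      (insert (v1 : Fin 2 ⊕ Fin n) (insert v2 (P2 a b)) ⊆ T) ∨
      (v1 ∉ T ∧ insert (v2 : Fin 2 ⊕ Fin n) (setB b) ⊆ T) := by
  constructor
  · intro hmt
    have hb : ∀ i, b i ≤ mT a b e (T.erase v2) i := by
      intro i
      have h := congrFun hmt i
      rw [← h]
      have := Finset.le_sup (f := fun k => gen a b e k i) h2
      simpa [gen_v2, mT] using this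
    by_cases h1 : v1 ∈ T
    · left
      intro k hk
      simp only [Finset.mem_insert] at hk
      rcases hk with rfl | rfl | hk
      · exact h1
      · exact h2
      · simp only [P2, Finset.mem_image, Finset.mem_filter] at hk
        obtain ⟨i, ⟨-, hi⟩, rfl⟩ := hk
        by_contra hni
        have := hb i
        have hle : mT a b e (T.erase v2) i ≤ a i := by
          apply Finset.sup_le
          intro k hk
          rcases k with t | j
          · fin_cases t
            · simp [gen]
            · exact absurd (Finset.mem_erase.1 hk).1 (by simp [v2])
          · rw [gen_inr]
            split
            · next hji =>
              exact absurd ((Finset.mem_erase.1 hk).2) (by subst hji; exact hni)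
            · exact Nat.zero_le _
        omega
    · right
      refine ⟨h1, ?_⟩
      intro k hk
      simp only [Finset.mem_insert] at hk
      rcases hk with rfl | hk
      · exact h2
      · simp only [setB, Finset.mem_image, Finset.mem_filter] at hk
        obtain ⟨i, ⟨-, hi⟩, rfl⟩ := hk
        by_contra hni
        have := hb i
        have hle : mT a b e (T.erase v2) i ≤ 0 := by
          apply Finset.sup_le
          intro k hk
          rcases k with t | j
          · fin_cases t
            · exact absurd ((Finset.mem_erase.1 hk).2) h1
            · exact absurd (Finset.mem_erase.1 hk).1 (by simp [v2])
          · rw [gen_inr]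
            split
            · next hji =>
              exact absurd ((Finset.mem_erase.1 hk).2) (by subst hji; exact hni)
            · exact le_rfl
        omega
  · intro h
    funext i
    apply le_antisymm
    · apply Finset.sup_le
      intro k hk
      by_cases hkv : k = v2
      · subst hkv
        rw [gen_v2]
        rcases h with h | ⟨h1, h⟩
        · have hv1 : v1 ∈ T := h (Finset.mem_insert_self _ _)
          by_cases hba : b i ≤ a i
          · calc b i ≤ a i := hba
              _ = gen a b e v1 i := by rw [gen_v1]
              _ ≤ _ := Finset.le_sup (f := fun k => gen a b e k i) (Finset.mem_erase.2 ⟨v1_ne_v2, hv1⟩)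
          · have hP : Sum.inr i ∈ P2 a b := by
              simp only [P2, Finset.mem_image, Finset.mem_filter]
              exact ⟨i, ⟨Finset.mem_univ _, by omega⟩, rfl⟩
            have hiT : Sum.inr i ∈ T := h (by simp [hP])
            calc b i ≤ e i := le_of_lt (lt_of_le_of_lt (le_max_right _ _) (he i))
              _ = gen a b e (Sum.inr i) i := by rw [gen_inr]; simp
              _ ≤ _ := Finset.le_sup (f := fun k => gen a b e k i) (Finset.mem_erase.2 ⟨by simp [v2], hiT⟩)
        · by_cases hbi : b i = 0
          · simp [hbi]
          · have hB : Sum.inr i ∈ setB b := by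
              simp only [setB, Finset.mem_image, Finset.mem_filter]
              exact ⟨i, ⟨Finset.mem_univ _, by omega⟩, rfl⟩
            have hiT : Sum.inr i ∈ T := h (by simp [hB])
            calc b i ≤ e i := le_of_lt (lt_of_le_of_lt (le_max_right _ _) (he i))
              _ = gen a b e (Sum.inr i) i := by rw [gen_inr]; simp
              _ ≤ _ := Finset.le_sup (f := fun k => gen a b e k i) (Finset.mem_erase.2 ⟨by simp [v2], hiT⟩)
      · exact Finset.le_sup (f := fun k => gen a b e k i)
          (Finset.mem_erase.2 ⟨hkv, hk⟩)
    · exact Finset.sup_mono (Finset.erase_subset _ _)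
end

section
/- With the matching M on 2^[n+2] defined from I = (u_1, u_2, x_1^{e_1},...,x_n^{e_n}) as above, a subset T ⊊ [n+2] is M-critical (appears in no edge of M) if and only if one of the following holds: (1) 1,2 ∈ T, P_1 ⊄ T, P_2 ⊄ T; (2) 1 ∈ T, 2 ∉ T, P_1 ∪ P_2 ⊆ T, P_0 ⊄ T; (3) 1 ∈ T, 2 ∉ T, P_2 ⊄ T, A ⊄ T; (4) 1 ∉ T, 2 ∈ T, P_1 ⊄ T, B ⊄ T; (5) 1 ∉ T, 2 ∉ T, A ⊄ T, B ⊄ T. -/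
open Finset

section Aux

variable {n : ℕ} {a b : Fin n → ℕ}

lemma hninl (v : Fin 2) (s : Finset (Fin n)) :
    (Sum.inl v : Fin 2 ⊕ Fin n) ∉ s.image Sum.inr := by simp

lemma hv12 : (v1 : Fin 2 ⊕ Fin n) ≠ v2 := by simp [v1, v2]

lemma sub_insert {v : Fin 2 ⊕ Fin n} {S T : Finset (Fin 2 ⊕ Fin n)} (hv : v ∉ S) :
    S ⊆ insert v T ↔ S ⊆ T := by
  constructor
  · intro h x hx
    rcases Finset.mem_insert.mp (h hx) with rfl | h'
    · exact absurd hx hv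
    · exact h'
  · intro h
    exact h.trans (Finset.subset_insert _ _)

lemma A_sub : setA a ⊆ P0 a b ∪ P1 a b ∪ P2 a b := by
  intro x hx
  simp only [setA, P0, P1, P2, Finset.mem_image, Finset.mem_filter, Finset.mem_univ,
    true_and, Finset.mem_union] at hx ⊢
  obtain ⟨i, hi, rfl⟩ := hx
  rcases lt_trichotomy (a i) (b i) with h | h | h
  · exact Or.inr ⟨i, h, rfl⟩
  · exact Or.inl (Or.inl ⟨i, h, rfl⟩)
  · exact Or.inl (Or.inr ⟨i, h, rfl⟩)

lemma P0_subset_A (hab : ∀ i, 0 < a i + b i) : P0 a b ⊆ setA a := by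
  intro x hx
  simp only [setA, P0, Finset.mem_image, Finset.mem_filter, Finset.mem_univ, true_and] at hx ⊢
  obtain ⟨i, hi, rfl⟩ := hx
  exact ⟨i, by have := hab i; omega, rfl⟩

lemma subset_of_insert_eq {T : Finset (Fin 2 ⊕ Fin n)} {s : Finset (Fin n)}
    (h : insert v2 T = Finset.univ.erase v1) : s.image Sum.inr ⊆ T := by
  intro x hx
  obtain ⟨i, _, rfl⟩ := Finset.mem_image.mp hx
  have hmem : (Sum.inr i : Fin 2 ⊕ Fin n) ∈ insert v2 T := by
    rw [h]
    exact Finset.mem_erase.mpr ⟨by simp [v1], Finset.mem_univ _⟩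
  rcases Finset.mem_insert.mp hmem with h' | h'
  · exact absurd h' (by simp [v2])
  · exact h'

end Aux

/-- characterization of the `M`-critical vertices `T ⊊ [n+2]`. -/
theorem stmt9 (n : ℕ) (a b e : Fin n → ℕ) (hab : ∀ i, 0 < a i + b i)
    (he : ∀ i, max (a i) (b i) < e i)
    (T : Finset (Fin 2 ⊕ Fin n)) (hT : T ≠ Finset.univ) :
    critical a b T ↔
      (v1 ∈ T ∧ v2 ∈ T ∧ ¬ P1 a b ⊆ T ∧ ¬ P2 a b ⊆ T) ∨
      (v1 ∈ T ∧ v2 ∉ T ∧ P1 a b ∪ P2 a b ⊆ T ∧ ¬ P0 a b ⊆ T) ∨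
      (v1 ∈ T ∧ v2 ∉ T ∧ ¬ P2 a b ⊆ T ∧ ¬ setA a ⊆ T) ∨
      (v1 ∉ T ∧ v2 ∈ T ∧ ¬ P1 a b ⊆ T ∧ ¬ setB b ⊆ T) ∨
      (v1 ∉ T ∧ v2 ∉ T ∧ ¬ setA a ⊆ T ∧ ¬ setB b ⊆ T) := by
  constructor
  · intro hc
    have h1 := (hc (T.erase v1)).1
    have h2 := (hc (T.erase v2)).1
    have h3 := (hc (insert v1 T)).2
    have h4 := (hc (insert v2 T)).2
    by_cases hv1 : v1 ∈ T <;> by_cases hv2 : v2 ∈ T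
    · -- both in
      left
      refine ⟨hv1, hv2, ?_, ?_⟩
      · intro hP1
        exact h1 (Or.inl ⟨hv1, hv2, hP1, rfl⟩)
      · intro hP2
        by_cases hP1 : P1 a b ⊆ T
        · exact h1 (Or.inl ⟨hv1, hv2, hP1, rfl⟩)
        · exact h2 (Or.inr (Or.inl ⟨hv1, hv2, hP1, hP2, rfl⟩))
    · -- v1 ∈, v2 ∉
      have hnA : ¬ setA a ⊆ T := fun hA =>
        h1 (Or.inr (Or.inr (Or.inl ⟨hv1, hv2, hA, rfl⟩)))
      have key : P1 a b ⊆ T ∨ ¬ P2 a b ⊆ T := by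
        by_contra hk
        push_neg at hk
        obtain ⟨hnP1, hP2⟩ := hk
        apply h4
        refine Or.inr (Or.inl ⟨Finset.mem_insert_of_mem hv1, Finset.mem_insert_self _ _,
          ?_, hP2.trans (Finset.subset_insert _ _), (Finset.erase_insert hv2).symm⟩)
        intro h
        exact hnP1 ((sub_insert (hninl 1 _)).mp h)
      rcases key with hP1 | hnP2
      · by_cases hP2 : P2 a b ⊆ T
        · refine Or.inr (Or.inl ⟨hv1, hv2, Finset.union_subset hP1 hP2, ?_⟩)
          intro hP0
          exact hnA (A_sub.trans (Finset.union_subset (Finset.union_subset hP0 hP1) hP2))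
        · exact Or.inr (Or.inr (Or.inl ⟨hv1, hv2, hP2, hnA⟩))
      · exact Or.inr (Or.inr (Or.inl ⟨hv1, hv2, hnP2, hnA⟩))
    · -- v1 ∉, v2 ∈
      have hnP1 : ¬ P1 a b ⊆ T := by
        intro hP1
        exact h3 (Or.inl ⟨Finset.mem_insert_self _ _, Finset.mem_insert_of_mem hv2,
          hP1.trans (Finset.subset_insert _ _), (Finset.erase_insert hv1).symm⟩)
      have hne : T ≠ Finset.univ.erase v1 := by
        intro heq
        apply hnP1
        rw [heq]
        exact Finset.subset_erase.mpr ⟨Finset.subset_univ _, hninl 0 _⟩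
      have hnB : ¬ setB b ⊆ T := fun hB =>
        h2 (Or.inr (Or.inr (Or.inr ⟨hv1, hv2, hB, hne, rfl⟩)))
      exact Or.inr (Or.inr (Or.inr (Or.inl ⟨hv1, hv2, hnP1, hnB⟩)))
    · -- both out
      have hnA : ¬ setA a ⊆ T := by
        intro hA
        apply h3
        refine Or.inr (Or.inr (Or.inl ⟨Finset.mem_insert_self _ _, ?_,
          hA.trans (Finset.subset_insert _ _), (Finset.erase_insert hv1).symm⟩))
        intro h
        rcases Finset.mem_insert.mp h with h' | h'
        · exact hv12 h'.symm
        · exact hv2 h'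
      have hneq : insert v2 T ≠ Finset.univ.erase v1 := by
        intro heq
        exact hnA (subset_of_insert_eq heq)
      have hnB : ¬ setB b ⊆ T := by
        intro hB
        apply h4
        refine Or.inr (Or.inr (Or.inr ⟨?_, Finset.mem_insert_self _ _,
          hB.trans (Finset.subset_insert _ _), hneq, (Finset.erase_insert hv2).symm⟩))
        intro h
        rcases Finset.mem_insert.mp h with h' | h'
        · exact hv12 h'
        · exact hv1 h'
      exact Or.inr (Or.inr (Or.inr (Or.inr ⟨hv1, hv2, hnA, hnB⟩)))
  · intro h T'
    constructor
    · intro hM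
      rcases hM with ⟨m1, m2, m3, -⟩ | ⟨m1, m2, m3, m4, -⟩ | ⟨m1, m2, m3, -⟩ |
        ⟨m1, m2, m3, m4, -⟩ <;>
        rcases h with ⟨c1, c2, c3, c4⟩ | ⟨c1, c2, c3, c4⟩ | ⟨c1, c2, c3, c4⟩ |
          ⟨c1, c2, c3, c4⟩ | ⟨c1, c2, c3, c4⟩ <;>
        first
          | exact c3 m3
          | exact c4 m4
          | exact c2 m2
          | exact c1 m1
          | exact m2 c2
          | exact m1 c1
          | exact c4 m3
          | exact c4 ((P0_subset_A hab).trans m3)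
    · intro hM
      rcases hM with ⟨m1, m2, m3, m4⟩ | ⟨m1, m2, m3, m4, m5⟩ | ⟨m1, m2, m3, m4⟩ |
        ⟨m1, m2, m3, m4, m5⟩
      · -- lower 1 : T = T'.erase v1
        subst m4
        have hv1T : v1 ∉ T'.erase v1 := Finset.notMem_erase _ _
        have hv2T : v2 ∈ T'.erase v1 := Finset.mem_erase.mpr ⟨fun h => hv12 h.symm, m2⟩
        have hP1T : P1 a b ⊆ T'.erase v1 := Finset.subset_erase.mpr ⟨m3, hninl 0 _⟩
        rcases h with ⟨c1, _⟩ | ⟨c1, _⟩ | ⟨c1, _⟩ | ⟨_, _, c3, _⟩ | ⟨_, c2, _⟩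
        · exact hv1T c1
        · exact hv1T c1
        · exact hv1T c1
        · exact c3 hP1T
        · exact c2 hv2T
      · -- lower 2 : T = T'.erase v2
        subst m5
        have hv2T : v2 ∉ T'.erase v2 := Finset.notMem_erase _ _
        have hv1T : v1 ∈ T'.erase v2 := Finset.mem_erase.mpr ⟨hv12, m1⟩
        have hP2T : P2 a b ⊆ T'.erase v2 := Finset.subset_erase.mpr ⟨m4, hninl 1 _⟩
        rcases h with ⟨_, c2, _⟩ | ⟨_, _, c3, _⟩ | ⟨_, _, c3, _⟩ | ⟨c1, _⟩ | ⟨c1, _⟩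
        · exact hv2T c2
        · exact m3 (((Finset.union_subset_iff.mp c3).1).trans (Finset.erase_subset _ _))
        · exact c3 hP2T
        · exact c1 hv1T
        · exact c1 hv1T
      · -- lower 3 : T = T'.erase v1, A ⊆ T'
        subst m4
        have hv1T : v1 ∉ T'.erase v1 := Finset.notMem_erase _ _
        have hv2T : v2 ∉ T'.erase v1 := fun h => m2 (Finset.mem_erase.mp h).2
        have hAT : setA a ⊆ T'.erase v1 := Finset.subset_erase.mpr ⟨m3, hninl 0 _⟩
        rcases h with ⟨c1, _⟩ | ⟨c1, _⟩ | ⟨c1, _⟩ | ⟨_, c2, _⟩ | ⟨_, _, c3, _⟩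
        · exact hv1T c1
        · exact hv1T c1
        · exact hv1T c1
        · exact hv2T c2
        · exact c3 hAT
      · -- lower 4 : T = T'.erase v2, B ⊆ T'
        subst m5
        have hv2T : v2 ∉ T'.erase v2 := Finset.notMem_erase _ _
        have hv1T : v1 ∉ T'.erase v2 := fun h => m1 (Finset.mem_erase.mp h).2
        have hBT : setB b ⊆ T'.erase v2 := Finset.subset_erase.mpr ⟨m3, hninl 1 _⟩
        rcases h with ⟨c1, _⟩ | ⟨c1, _⟩ | ⟨c1, _⟩ | ⟨_, c2, _⟩ | ⟨_, _, _, c4⟩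
        · exact hv1T c1
        · exact hv1T c1
        · exact hv1T c1
        · exact hv2T c2
        · exact c4 hBT
end

section
/- With the matching M on 2^[n+2] defined from I = (u_1, u_2, x_1^{e_1},...,x_n^{e_n}) as above, the number of M-critical vertices of cardinality n equals |P_1|·|P_2| + |A ∩ B|. -/
open Finset

/-! ### Auxiliary material -/

lemma inl_notMem_image_inr {n : ℕ} (x : Fin 2) (s : Finset (Fin n)) :
    Sum.inl x ∉ s.image Sum.inr := by simp

lemma v1_notMem_P1 {n : ℕ} (a b : Fin n → ℕ) : v1 ∉ P1 a b := inl_notMem_image_inr _ _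
lemma v2_notMem_P1 {n : ℕ} (a b : Fin n → ℕ) : v2 ∉ P1 a b := inl_notMem_image_inr _ _
lemma v1_notMem_P2 {n : ℕ} (a b : Fin n → ℕ) : v1 ∉ P2 a b := inl_notMem_image_inr _ _
lemma v2_notMem_P2 {n : ℕ} (a b : Fin n → ℕ) : v2 ∉ P2 a b := inl_notMem_image_inr _ _

/-- Characterization of criticality by eight explicit conditions. -/
lemma crit_iff {n : ℕ} (a b : Fin n → ℕ) (T : Finset (Fin 2 ⊕ Fin n)) :
    critical a b T ↔
      ¬(v1 ∈ T ∧ v2 ∈ T ∧ P1 a b ⊆ T) ∧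
      ¬(v1 ∈ T ∧ v2 ∈ T ∧ ¬ P1 a b ⊆ T ∧ P2 a b ⊆ T) ∧
      ¬(v1 ∈ T ∧ v2 ∉ T ∧ setA a ⊆ T) ∧
      ¬(v1 ∉ T ∧ v2 ∈ T ∧ setB b ⊆ T ∧ T ≠ Finset.univ.erase v1) ∧
      ¬(v1 ∉ T ∧ v2 ∈ T ∧ P1 a b ⊆ T) ∧
      ¬(v1 ∈ T ∧ v2 ∉ T ∧ ¬ P1 a b ⊆ T ∧ P2 a b ⊆ T) ∧
      ¬(v1 ∉ T ∧ v2 ∉ T ∧ setA a ⊆ T) ∧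
      ¬(v1 ∉ T ∧ v2 ∉ T ∧ setB b ⊆ T ∧ insert v2 T ≠ Finset.univ.erase v1) := by
  constructor
  · intro h
    refine ⟨?_, ?_, ?_, ?_, ?_, ?_, ?_, ?_⟩
    · rintro ⟨h1, h2, h3⟩
      exact (h (T.erase v1)).1 (Or.inl ⟨h1, h2, h3, rfl⟩)
    · rintro ⟨h1, h2, h3, h4⟩
      exact (h (T.erase v2)).1 (Or.inr (Or.inl ⟨h1, h2, h3, h4, rfl⟩))
    · rintro ⟨h1, h2, h3⟩
      exact (h (T.erase v1)).1 (Or.inr (Or.inr (Or.inl ⟨h1, h2, h3, rfl⟩)))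
    · rintro ⟨h1, h2, h3, h4⟩
      exact (h (T.erase v2)).1 (Or.inr (Or.inr (Or.inr ⟨h1, h2, h3, h4, rfl⟩)))
    · rintro ⟨h1, h2, h3⟩
      refine (h (insert v1 T)).2 (Or.inl ⟨mem_insert_self _ _, mem_insert_of_mem h2,
        h3.trans (subset_insert _ _), (erase_insert h1).symm⟩)
    · rintro ⟨h1, h2, h3, h4⟩
      refine (h (insert v2 T)).2 (Or.inr (Or.inl ⟨mem_insert_of_mem h1, mem_insert_self _ _,
        ?_, h4.trans (subset_insert _ _), (erase_insert h2).symm⟩))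
      rw [subset_insert_iff_of_notMem (v2_notMem_P1 a b)]
      exact h3
    · rintro ⟨h1, h2, h3⟩
      refine (h (insert v1 T)).2 (Or.inr (Or.inr (Or.inl ⟨mem_insert_self _ _, ?_,
        h3.trans (subset_insert _ _), (erase_insert h1).symm⟩)))
      simp only [mem_insert, not_or]
      exact ⟨fun hh => v1_ne_v2 hh.symm, h2⟩
    · rintro ⟨h1, h2, h3, h4⟩
      refine (h (insert v2 T)).2 (Or.inr (Or.inr (Or.inr ⟨?_, mem_insert_self _ _,
        h3.trans (subset_insert _ _), h4, (erase_insert h2).symm⟩)))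
      simp only [mem_insert, not_or]
      exact ⟨v1_ne_v2, h1⟩
  · rintro ⟨c1, c2, c3, c4, c5, c6, c7, c8⟩ T'
    constructor
    · rintro (⟨h1, h2, h3, -⟩ | ⟨h1, h2, h3, h4, -⟩ | ⟨h1, h2, h3, -⟩ | ⟨h1, h2, h3, h4, -⟩)
      · exact c1 ⟨h1, h2, h3⟩
      · exact c2 ⟨h1, h2, h3, h4⟩
      · exact c3 ⟨h1, h2, h3⟩
      · exact c4 ⟨h1, h2, h3, h4⟩
    · rintro (⟨h1, h2, h3, h4⟩ | ⟨h1, h2, h3, h4, h5⟩ | ⟨h1, h2, h3, h4⟩ | ⟨h1, h2, h3, h4, h5⟩)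
      · subst h4
        refine c5 ⟨notMem_erase _ _, mem_erase.2 ⟨fun hh => v1_ne_v2 hh.symm, h2⟩, ?_⟩
        intro x hx
        exact mem_erase.2 ⟨fun hh => v1_notMem_P1 a b (hh ▸ hx), h3 hx⟩
      · subst h5
        refine c6 ⟨mem_erase.2 ⟨v1_ne_v2, h1⟩, notMem_erase _ _, ?_, ?_⟩
        · intro hP
          exact h3 (hP.trans (erase_subset _ _))
        · intro x hx
          exact mem_erase.2 ⟨fun hh => v2_notMem_P2 a b (hh ▸ hx), h4 hx⟩
      · subst h4
        refine c7 ⟨notMem_erase _ _, fun hh => h2 (mem_of_mem_erase hh), ?_⟩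
        intro x hx
        exact mem_erase.2 ⟨fun hh => inl_notMem_image_inr _ _ (hh ▸ hx), h3 hx⟩
      · subst h5
        refine c8 ⟨fun hh => h1 (mem_of_mem_erase hh), notMem_erase _ _, ?_, ?_⟩
        · intro x hx
          exact mem_erase.2 ⟨fun hh => inl_notMem_image_inr _ _ (hh ▸ hx), h3 hx⟩
        · rw [insert_erase h2]
          exact h4

/-- The complement of a pair, as a candidate critical vertex of cardinality `n`. -/
def cT {n : ℕ} (u w : Fin 2 ⊕ Fin n) : Finset (Fin 2 ⊕ Fin n) :=
  (Finset.univ.erase u).erase w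

lemma mem_cT {n : ℕ} {u w x : Fin 2 ⊕ Fin n} : x ∈ cT u w ↔ x ≠ w ∧ x ≠ u := by
  simp [cT, Finset.mem_erase]

lemma card_cT {n : ℕ} {u w : Fin 2 ⊕ Fin n} (h : u ≠ w) : (cT u w).card = n := by
  rw [cT, card_erase_of_mem (mem_erase.2 ⟨Ne.symm h, mem_univ w⟩),
    card_erase_of_mem (mem_univ u), card_univ]
  simp [Fintype.card_sum]

lemma card_cT' {n : ℕ} {u w : Fin 2 ⊕ Fin n} (h : u ≠ w) : (cT u w).card = n := card_cT h

lemma eq_cT {n : ℕ} {u w : Fin 2 ⊕ Fin n} {T : Finset (Fin 2 ⊕ Fin n)}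
    (huw : u ≠ w) (hu : u ∉ T) (hw : w ∉ T) (hcard : T.card = n) : T = cT u w := by
  have hsub : T ⊆ cT u w := by
    intro x hx
    exact mem_cT.2 ⟨fun hh => hw (hh ▸ hx), fun hh => hu (hh ▸ hx)⟩
  exact Finset.eq_of_subset_of_card_le hsub (by rw [card_cT huw, hcard])

lemma cT_resolve {n : ℕ} {u w u' w' : Fin 2 ⊕ Fin n} (h : cT u w = cT u' w') :
    (u' = u ∨ u' = w) ∧ (w' = u ∨ w' = w) := by
  have h1 : u' ∉ cT u w := by rw [h]; exact fun hh => (mem_cT.1 hh).2 rfl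
  have h2 : w' ∉ cT u w := by rw [h]; exact fun hh => (mem_cT.1 hh).1 rfl
  rw [mem_cT] at h1 h2
  constructor
  · by_contra hc
    push_neg at hc
    exact h1 ⟨hc.2, hc.1⟩
  · by_contra hc
    push_neg at hc
    exact h2 ⟨hc.2, hc.1⟩

/-- The three families of critical vertices of cardinality `n`. -/
def FF1 {n : ℕ} (a b : Fin n → ℕ) : Finset (Finset (Fin 2 ⊕ Fin n)) :=
  ((Finset.univ.filter fun i => b i < a i) ×ˢ (Finset.univ.filter fun i => a i < b i)).image
    fun p => cT (Sum.inr p.1) (Sum.inr p.2)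

def FF2 {n : ℕ} (a b : Fin n → ℕ) : Finset (Finset (Fin 2 ⊕ Fin n)) :=
  (Finset.univ.filter fun i => b i < a i ∧ 0 < b i).image fun i => cT (Sum.inr i) v1

def FF3 {n : ℕ} (a b : Fin n → ℕ) : Finset (Finset (Fin 2 ⊕ Fin n)) :=
  (Finset.univ.filter fun i => (a i < b i ∧ 0 < a i) ∨ a i = b i).image
    fun i => cT (Sum.inr i) v2

lemma inr_ne_v1 {n : ℕ} (i : Fin n) : (Sum.inr i : Fin 2 ⊕ Fin n) ≠ v1 := by simp [v1]
lemma inr_ne_v2 {n : ℕ} (i : Fin n) : (Sum.inr i : Fin 2 ⊕ Fin n) ≠ v2 := by simp [v2]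

lemma mem_P1_iff {n : ℕ} {a b : Fin n → ℕ} {i : Fin n} :
    Sum.inr i ∈ P1 a b ↔ b i < a i := by simp [P1]
lemma mem_P2_iff {n : ℕ} {a b : Fin n → ℕ} {i : Fin n} :
    Sum.inr i ∈ P2 a b ↔ a i < b i := by simp [P2]
lemma mem_setA_iff {n : ℕ} {a : Fin n → ℕ} {i : Fin n} :
    Sum.inr i ∈ setA a ↔ 0 < a i := by simp [setA]
lemma mem_setB_iff {n : ℕ} {b : Fin n → ℕ} {i : Fin n} :
    Sum.inr i ∈ setB b ↔ 0 < b i := by simp [setB]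

lemma not_subset_P1 {n : ℕ} {a b : Fin n → ℕ} {T : Finset (Fin 2 ⊕ Fin n)}
    (h : ¬ P1 a b ⊆ T) : ∃ i, b i < a i ∧ Sum.inr i ∉ T := by
  obtain ⟨x, hx, hxT⟩ := not_subset.1 h
  simp only [P1, mem_image, mem_filter, mem_univ, true_and] at hx
  obtain ⟨i, hi, rfl⟩ := hx
  exact ⟨i, hi, hxT⟩

lemma not_subset_P2 {n : ℕ} {a b : Fin n → ℕ} {T : Finset (Fin 2 ⊕ Fin n)}
    (h : ¬ P2 a b ⊆ T) : ∃ i, a i < b i ∧ Sum.inr i ∉ T := by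
  obtain ⟨x, hx, hxT⟩ := not_subset.1 h
  simp only [P2, mem_image, mem_filter, mem_univ, true_and] at hx
  obtain ⟨i, hi, rfl⟩ := hx
  exact ⟨i, hi, hxT⟩

lemma not_subset_setA {n : ℕ} {a : Fin n → ℕ} {T : Finset (Fin 2 ⊕ Fin n)}
    (h : ¬ setA a ⊆ T) : ∃ i, 0 < a i ∧ Sum.inr i ∉ T := by
  obtain ⟨x, hx, hxT⟩ := not_subset.1 h
  simp only [setA, mem_image, mem_filter, mem_univ, true_and] at hx
  obtain ⟨i, hi, rfl⟩ := hx
  exact ⟨i, hi, hxT⟩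

lemma not_subset_setB {n : ℕ} {b : Fin n → ℕ} {T : Finset (Fin 2 ⊕ Fin n)}
    (h : ¬ setB b ⊆ T) : ∃ i, 0 < b i ∧ Sum.inr i ∉ T := by
  obtain ⟨x, hx, hxT⟩ := not_subset.1 h
  simp only [setB, mem_image, mem_filter, mem_univ, true_and] at hx
  obtain ⟨i, hi, rfl⟩ := hx
  exact ⟨i, hi, hxT⟩

/-- The set of critical vertices of cardinality `n` is exactly `FF1 ∪ FF2 ∪ FF3`. -/
lemma crit_set_eq {n : ℕ} (a b : Fin n → ℕ) (hab : ∀ i, 0 < a i + b i) :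
    {T : Finset (Fin 2 ⊕ Fin n) | critical a b T ∧ T.card = n} =
      ↑(FF1 a b ∪ FF2 a b ∪ FF3 a b) := by
  ext T
  simp only [Set.mem_setOf_eq, coe_union, Set.mem_union, mem_coe]
  constructor
  · rintro ⟨hcrit, hcard⟩
    obtain ⟨c1, c2, c3, c4, c5, c6, c7, c8⟩ := (crit_iff a b T).1 hcrit
    by_cases hv1 : v1 ∈ T <;> by_cases hv2 : v2 ∈ T
    · -- both in T : family 1
      have hP1 : ¬ P1 a b ⊆ T := fun hh => c1 ⟨hv1, hv2, hh⟩
      have hP2 : ¬ P2 a b ⊆ T := fun hh => c2 ⟨hv1, hv2, hP1, hh⟩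
      obtain ⟨i, hi, hiT⟩ := not_subset_P1 hP1
      obtain ⟨j, hj, hjT⟩ := not_subset_P2 hP2
      have hij : (Sum.inr i : Fin 2 ⊕ Fin n) ≠ Sum.inr j := by
        intro hh
        cases Sum.inr_injective hh
        omega
      left; left
      rw [FF1, mem_image]
      exact ⟨(i, j), by simp [mem_product, hi, hj], (eq_cT hij hiT hjT hcard).symm⟩
    · -- v1 ∈ T, v2 ∉ T : family 3
      have hA : ¬ setA a ⊆ T := fun hh => c3 ⟨hv1, hv2, hh⟩
      obtain ⟨i, hi, hiT⟩ := not_subset_setA hA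
      have hTeq : T = cT (Sum.inr i) v2 :=
        eq_cT (fun hh => inr_ne_v2 i hh) hiT hv2 hcard
      right
      rw [FF3, mem_image]
      refine ⟨i, ?_, hTeq.symm⟩
      simp only [mem_filter, mem_univ, true_and]
      rcases lt_trichotomy (a i) (b i) with h | h | h
      · exact Or.inl ⟨h, hi⟩
      · exact Or.inr h
      · exfalso
        have hP1 : ¬ P1 a b ⊆ T := fun hh => hiT (hh (mem_P1_iff.2 h))
        have hP2 : ¬ P2 a b ⊆ T := fun hh => c6 ⟨hv1, hv2, hP1, hh⟩
        obtain ⟨j, hj, hjT⟩ := not_subset_P2 hP2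
        rw [hTeq, mem_cT, not_and_or, not_not, not_not] at hjT
        rcases hjT with hh | hh
        · exact inr_ne_v2 j hh
        · cases Sum.inr_injective hh; omega
    · -- v1 ∉ T, v2 ∈ T : family 2
      have hP1 : ¬ P1 a b ⊆ T := fun hh => c5 ⟨hv1, hv2, hh⟩
      obtain ⟨i, hi, hiT⟩ := not_subset_P1 hP1
      have hTeq : T = cT (Sum.inr i) v1 :=
        eq_cT (fun hh => inr_ne_v1 i hh) hiT hv1 hcard
      have hB : ¬ setB b ⊆ T := by
        intro hh
        apply c4 ⟨hv1, hv2, hh, ?_⟩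
        intro hTe
        have : T.card = n + 1 := by
          rw [hTe, card_erase_of_mem (mem_univ _), card_univ]
          simp [Fintype.card_sum]
          omega
        omega
      obtain ⟨j, hj, hjT⟩ := not_subset_setB hB
      have hji : j = i := by
        rw [hTeq, mem_cT, not_and_or, not_not, not_not] at hjT
        rcases hjT with hh | hh
        · exact absurd hh (inr_ne_v1 j)
        · exact Sum.inr_injective hh
      left; right
      rw [FF2, mem_image]
      exact ⟨i, by simp [hi, hji ▸ hj], hTeq.symm⟩
    · -- neither : impossible
      exfalso
      have hA : ¬ setA a ⊆ T := fun hh => c7 ⟨hv1, hv2, hh⟩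
      obtain ⟨i, hi, hiT⟩ := not_subset_setA hA
      have hsub : ({v1, v2, Sum.inr i} : Finset (Fin 2 ⊕ Fin n)) ⊆ Tᶜ := by
        intro x hx
        simp only [mem_insert, mem_singleton] at hx
        rw [Finset.mem_compl]
        rcases hx with rfl | rfl | rfl <;> assumption
      have hc3 : ({v1, v2, Sum.inr i} : Finset (Fin 2 ⊕ Fin n)).card = 3 := by
        rw [card_insert_of_notMem (by
          simp only [mem_insert, mem_singleton, not_or]
          exact ⟨v1_ne_v2, fun hh => inr_ne_v1 i hh.symm⟩),
          card_insert_of_notMem (by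
          simp only [mem_singleton]
          exact fun hh => inr_ne_v2 i hh.symm), card_singleton]
      have hcompl : (Tᶜ : Finset (Fin 2 ⊕ Fin n)).card = 2 := by
        rw [Finset.card_compl, hcard]
        simp
      have := Finset.card_le_card hsub
      omega
  · intro hT
    rcases hT with (hT | hT) | hT
    · rw [FF1, mem_image] at hT
      obtain ⟨⟨i, j⟩, hij, rfl⟩ := hT
      rw [mem_product] at hij
      simp only [mem_filter, mem_univ, true_and] at hij
      obtain ⟨hi, hj⟩ := hij
      have hij' : (Sum.inr i : Fin 2 ⊕ Fin n) ≠ Sum.inr j := by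
        intro hh; injection hh with hh; subst hh; omega
      have hv1 : v1 ∈ cT (Sum.inr i) (Sum.inr j) :=
        mem_cT.2 ⟨fun h => inr_ne_v1 j h.symm, fun h => inr_ne_v1 i h.symm⟩
      have hv2 : v2 ∈ cT (Sum.inr i) (Sum.inr j) :=
        mem_cT.2 ⟨fun h => inr_ne_v2 j h.symm, fun h => inr_ne_v2 i h.symm⟩
      have hiT : (Sum.inr i : Fin 2 ⊕ Fin n) ∉ cT (Sum.inr i) (Sum.inr j) := by
        rw [mem_cT]; tauto
      have hjT : (Sum.inr j : Fin 2 ⊕ Fin n) ∉ cT (Sum.inr i) (Sum.inr j) := by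
        rw [mem_cT]; tauto
      refine ⟨(crit_iff a b _).2 ⟨?_, ?_, ?_, ?_, ?_, ?_, ?_, ?_⟩, card_cT hij'⟩
      · rintro ⟨-, -, hs⟩; exact hiT (hs (mem_P1_iff.2 hi))
      · rintro ⟨-, -, -, hs⟩; exact hjT (hs (mem_P2_iff.2 hj))
      · rintro ⟨-, hh, -⟩; exact hh hv2
      · rintro ⟨hh, -, -⟩; exact hh hv1
      · rintro ⟨hh, -, -⟩; exact hh hv1
      · rintro ⟨-, hh, -⟩; exact hh hv2
      · rintro ⟨hh, -, -⟩; exact hh hv1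
      · rintro ⟨hh, -, -⟩; exact hh hv1
    · rw [FF2, mem_image] at hT
      obtain ⟨i, hi, rfl⟩ := hT
      simp only [mem_filter, mem_univ, true_and] at hi
      obtain ⟨hi1, hi2⟩ := hi
      have hv1 : v1 ∉ cT (Sum.inr i) v1 := by rw [mem_cT]; tauto
      have hv2 : v2 ∈ cT (Sum.inr i) v1 :=
        mem_cT.2 ⟨fun h => v1_ne_v2 h.symm, fun h => inr_ne_v2 i h.symm⟩
      have hiT : (Sum.inr i : Fin 2 ⊕ Fin n) ∉ cT (Sum.inr i) v1 := by
        rw [mem_cT]; tauto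
      refine ⟨(crit_iff a b _).2 ⟨?_, ?_, ?_, ?_, ?_, ?_, ?_, ?_⟩, card_cT (inr_ne_v1 i)⟩
      · rintro ⟨hh, -, -⟩; exact hv1 hh
      · rintro ⟨hh, -, -⟩; exact hv1 hh
      · rintro ⟨hh, -, -⟩; exact hv1 hh
      · rintro ⟨-, -, hs, -⟩; exact hiT (hs (mem_setB_iff.2 hi2))
      · rintro ⟨-, -, hs⟩; exact hiT (hs (mem_P1_iff.2 hi1))
      · rintro ⟨hh, -, -⟩; exact hv1 hh
      · rintro ⟨-, hh, -⟩; exact hh hv2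
      · rintro ⟨-, hh, -⟩; exact hh hv2
    · rw [FF3, mem_image] at hT
      obtain ⟨i, hi, rfl⟩ := hT
      simp only [mem_filter, mem_univ, true_and] at hi
      have hai : 0 < a i := by
        rcases hi with ⟨-, h⟩ | h
        · exact h
        · have := hab i; omega
      have hv1 : v1 ∈ cT (Sum.inr i) v2 :=
        mem_cT.2 ⟨v1_ne_v2, fun h => inr_ne_v1 i h.symm⟩
      have hv2 : v2 ∉ cT (Sum.inr i) v2 := by rw [mem_cT]; tauto
      have hiT : (Sum.inr i : Fin 2 ⊕ Fin n) ∉ cT (Sum.inr i) v2 := by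
        rw [mem_cT]; tauto
      refine ⟨(crit_iff a b _).2 ⟨?_, ?_, ?_, ?_, ?_, ?_, ?_, ?_⟩, card_cT (inr_ne_v2 i)⟩
      · rintro ⟨-, hh, -⟩; exact hv2 hh
      · rintro ⟨-, hh, -⟩; exact hv2 hh
      · rintro ⟨-, -, hs⟩; exact hiT (hs (mem_setA_iff.2 hai))
      · rintro ⟨hh, -, -⟩; exact hh hv1
      · rintro ⟨hh, -, -⟩; exact hh hv1
      · rintro ⟨-, -, hnP1, hP2⟩
        rcases hi with ⟨hlt, -⟩ | heq
        · exact hiT (hP2 (mem_P2_iff.2 hlt))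
        · apply hnP1
          intro x hx
          simp only [P1, mem_image, mem_filter, mem_univ, true_and] at hx
          obtain ⟨k, hk, rfl⟩ := hx
          refine mem_cT.2 ⟨inr_ne_v2 k, ?_⟩
          intro hh
          cases Sum.inr_injective hh
          omega
      · rintro ⟨hh, -, -⟩; exact hh hv1
      · rintro ⟨hh, -, -⟩; exact hh hv1

/-- the number of `M`-critical vertices of cardinality `n` equals
`|P₁|·|P₂| + |A ∩ B|` (the Cohen–Macaulay type of `S/I`). -/
theorem stmt12 (n : ℕ) (a b e : Fin n → ℕ) (hab : ∀ i, 0 < a i + b i)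
    (he : ∀ i, max (a i) (b i) < e i) :
    {T : Finset (Fin 2 ⊕ Fin n) | critical a b T ∧ T.card = n}.ncard =
      (P1 a b).card * (P2 a b).card + (setA a ∩ setB b).card := by
  rw [crit_set_eq a b hab, Set.ncard_coe_finset]
  -- disjointness facts
  have hd12 : Disjoint (FF1 a b) (FF2 a b) := by
    rw [Finset.disjoint_left]
    intro T h1 h2
    rw [FF1, mem_image] at h1
    rw [FF2, mem_image] at h2
    obtain ⟨⟨i, j⟩, -, rfl⟩ := h1
    obtain ⟨k, -, hk⟩ := h2
    have hx : v1 ∈ cT (Sum.inr i) (Sum.inr j) :=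
      mem_cT.2 ⟨fun h => inr_ne_v1 j h.symm, fun h => inr_ne_v1 i h.symm⟩
    rw [← hk] at hx
    exact (mem_cT.1 hx).1 rfl
  have hd13 : Disjoint (FF1 a b) (FF3 a b) := by
    rw [Finset.disjoint_left]
    intro T h1 h2
    rw [FF1, mem_image] at h1
    rw [FF3, mem_image] at h2
    obtain ⟨⟨i, j⟩, -, rfl⟩ := h1
    obtain ⟨k, -, hk⟩ := h2
    have hx : v2 ∈ cT (Sum.inr i) (Sum.inr j) :=
      mem_cT.2 ⟨fun h => inr_ne_v2 j h.symm, fun h => inr_ne_v2 i h.symm⟩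
    rw [← hk] at hx
    exact (mem_cT.1 hx).1 rfl
  have hd23 : Disjoint (FF2 a b) (FF3 a b) := by
    rw [Finset.disjoint_left]
    intro T h1 h2
    rw [FF2, mem_image] at h1
    rw [FF3, mem_image] at h2
    obtain ⟨i, -, rfl⟩ := h1
    obtain ⟨k, -, hk⟩ := h2
    have hx : v2 ∈ cT (Sum.inr i) v1 :=
      mem_cT.2 ⟨fun h => v1_ne_v2 h.symm, fun h => inr_ne_v2 i h.symm⟩
    rw [← hk] at hx
    exact (mem_cT.1 hx).1 rfl
  rw [Finset.card_union_of_disjoint (by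
    rw [Finset.disjoint_union_left]; exact ⟨hd13, hd23⟩),
    Finset.card_union_of_disjoint hd12]
  -- card FF1
  have hc1 : (FF1 a b).card = (P1 a b).card * (P2 a b).card := by
    rw [FF1, Finset.card_image_of_injOn, card_product, P1, P2,
      Finset.card_image_of_injective _ Sum.inr_injective,
      Finset.card_image_of_injective _ Sum.inr_injective]
    rintro ⟨i, j⟩ hij ⟨k, l⟩ hkl heq
    rw [mem_coe, mem_product] at hij hkl
    simp only [mem_filter, mem_univ, true_and] at hij hkl
    obtain ⟨h1, h2⟩ := cT_resolve heq
    have hik : k = i := by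
      rcases h1 with hh | hh
      · exact Sum.inr_injective hh
      · cases Sum.inr_injective hh
        exact ((by omega : False)).elim
    have hjl : l = j := by
      rcases h2 with hh | hh
      · cases Sum.inr_injective hh
        exact ((by omega : False)).elim
      · exact Sum.inr_injective hh
    simp [hik, hjl]
  -- card FF2
  have hc2 : (FF2 a b).card =
      ((Finset.univ.filter fun i => b i < a i ∧ 0 < b i)).card := by
    rw [FF2, Finset.card_image_of_injOn]
    intro i _ j _ heq
    obtain ⟨h1, -⟩ := cT_resolve heq
    rcases h1 with hh | hh
    · exact (Sum.inr_injective hh).symm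
    · exact absurd hh (inr_ne_v1 j)
  -- card FF3
  have hc3 : (FF3 a b).card =
      ((Finset.univ.filter fun i => (a i < b i ∧ 0 < a i) ∨ a i = b i)).card := by
    rw [FF3, Finset.card_image_of_injOn]
    intro i _ j _ heq
    obtain ⟨h1, -⟩ := cT_resolve heq
    rcases h1 with hh | hh
    · exact (Sum.inr_injective hh).symm
    · exact absurd hh (inr_ne_v2 j)
  -- card of A ∩ B
  have hAB : (setA a ∩ setB b).card =
      ((Finset.univ.filter fun i => 0 < a i ∧ 0 < b i)).card := by
    rw [setA, setB, ← Finset.image_inter _ _ Sum.inr_injective,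
      Finset.card_image_of_injective _ Sum.inr_injective, ← Finset.filter_and]
  have hsplit : ((Finset.univ.filter fun i => 0 < a i ∧ 0 < b i)).card =
      ((Finset.univ.filter fun i => b i < a i ∧ 0 < b i)).card +
      ((Finset.univ.filter fun i => (a i < b i ∧ 0 < a i) ∨ a i = b i)).card := by
    rw [← Finset.card_union_of_disjoint (by
      rw [Finset.disjoint_left]
      intro x hx hx'
      simp only [mem_filter, mem_univ, true_and] at hx hx'
      omega), ← Finset.filter_or]
    apply congrArg
    apply Finset.filter_congr
    intro i _
    have := hab i
    constructor
    · intro h; omega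
    · intro h; omega
  rw [hc1, hc2, hc3, hAB, hsplit]
  omega
end
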